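/- Let n and m be non-negative integers with m = ⌊(n+3)/6⌋ + δ_{1,(n mod 6)}. For every k ∈ {0,…,⌊n/3⌋-1} of the same parity as n, let ∇_k = ρ(∇(bs_n(k, (k-n)/2))), whose (i,j)-entry equals C((k-n)/2 + j - i, k + 1 - i) + C((k+n)/2 - j, k + i - j) + C((k-n)/2 + i - 1, k + j - n) mod 2 for 1 ≤ i ≤ j ≤ n. Then, when n is even, the set {∇_{2k} : k ∈ {0,…,m-1}} is a basis of DST(n), and when n is odd, the set {U_n} ∪ {∇_{2k+1} : k ∈ {0,…,m-2}} is a basis of DST(n). -/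

import Mathlib

open Finset

namespace Steinhaus

/-- Extended binomial coefficient `C(a,b)` for integers `a`, `b`:
`C(a,0) = 1`, `C(0,b) = 0` for `b > 0`, Pascal's rule everywhere; in particular
`C(a,b) = 0` for `b < 0` and `C(a,b) = (-1)^b C(b-a-1,b)` for `a < 0 ≤ b`. -/
def ibinom (a b : ℤ) : ℤ :=
  if b < 0 then 0
  else if 0 ≤ a then (a.toNat.choose b.toNat : ℤ)
  else (-1) ^ b.toNat * ((b - a - 1).toNat.choose b.toNat : ℤ)

/-- `(i,j)` is an index of the triangle of size `n`, i.e. `1 ≤ i ≤ j ≤ n`. -/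
def InTri (n i j : ℕ) : Prop := 1 ≤ i ∧ i ≤ j ∧ j ≤ n

instance (n i j : ℕ) : Decidable (InTri n i j) :=
  inferInstanceAs (Decidable (1 ≤ i ∧ i ≤ j ∧ j ≤ n))

/-- The `ZMod 2`-vector space of binary Steinhaus triangles of size `n`,
realized as functions `ℕ → ℕ → ZMod 2` vanishing outside the triangle
`{(i,j) | 1 ≤ i ≤ j ≤ n}` and satisfying the local rule
`a i j = a (i-1) (j-1) + a (i-1) j` inside it. -/
def ST (n : ℕ) : Submodule (ZMod 2) (ℕ → ℕ → ZMod 2) where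
  carrier := {a | (∀ i j, ¬ InTri n i j → a i j = 0) ∧
    ∀ i j, 2 ≤ i → i ≤ j → j ≤ n → a i j = a (i - 1) (j - 1) + a (i - 1) j}
  add_mem' := by
    rintro a b ⟨ha0, ha1⟩ ⟨hb0, hb1⟩
    refine ⟨fun i j h => ?_, fun i j h2 hij hjn => ?_⟩
    · simp only [Pi.add_apply, ha0 i j h, hb0 i j h, add_zero]
    · simp only [Pi.add_apply, ha1 i j h2 hij hjn, hb1 i j h2 hij hjn]
      ring
  zero_mem' := ⟨fun _ _ _ => rfl, fun _ _ _ _ _ => by simp⟩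
  smul_mem' := by
    rintro c a ⟨ha0, ha1⟩
    refine ⟨fun i j h => ?_, fun i j h2 hij hjn => ?_⟩
    · simp only [Pi.smul_apply, ha0 i j h, smul_zero]
    · simp only [Pi.smul_apply, ha1 i j h2 hij hjn, smul_add]

/-- The first row of the triangle `a` (of size `n`) is the sequence `S`;
equivalently, `a = ∇S`. -/
def FirstRow (n : ℕ) (a : ℕ → ℕ → ZMod 2) (S : ℕ → ZMod 2) : Prop :=
  ∀ j, 1 ≤ j → j ≤ n → a 1 j = S j

/-- The rotation `r` by 120 degrees: `r(a)_{i,j} = a_{j-i+1, n-i+1}`. -/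
def rot (n : ℕ) (a : ℕ → ℕ → ZMod 2) : ℕ → ℕ → ZMod 2 :=
  fun i j => if InTri n i j then a (j - i + 1) (n - i + 1) else 0

/-- The horizontal reflection `h`: `h(a)_{i,j} = a_{i, n-j+i}`. -/
def hrefl (n : ℕ) (a : ℕ → ℕ → ZMod 2) : ℕ → ℕ → ZMod 2 :=
  fun i j => if InTri n i j then a i (n - j + i) else 0

lemma rot_add (n : ℕ) (a b : ℕ → ℕ → ZMod 2) :
    rot n (a + b) = rot n a + rot n b := by
  funext i j
  simp only [rot, Pi.add_apply]
  split_ifs <;> simp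

lemma rot_smul (n : ℕ) (c : ZMod 2) (a : ℕ → ℕ → ZMod 2) :
    rot n (c • a) = c • rot n a := by
  funext i j
  simp only [rot, Pi.smul_apply]
  split_ifs <;> simp

lemma hrefl_add (n : ℕ) (a b : ℕ → ℕ → ZMod 2) :
    hrefl n (a + b) = hrefl n a + hrefl n b := by
  funext i j
  simp only [hrefl, Pi.add_apply]
  split_ifs <;> simp

lemma hrefl_smul (n : ℕ) (c : ZMod 2) (a : ℕ → ℕ → ZMod 2) :
    hrefl n (c • a) = c • hrefl n a := by
  funext i j
  simp only [hrefl, Pi.smul_apply]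
  split_ifs <;> simp

/-- The linear map `ρ = r² + r + id`. -/
def rho (n : ℕ) (a : ℕ → ℕ → ZMod 2) : ℕ → ℕ → ZMod 2 :=
  rot n (rot n a) + rot n a + a

/-- The subspace of rotationally symmetric Steinhaus triangles (fixed by `r`). -/
def RST (n : ℕ) : Submodule (ZMod 2) (ℕ → ℕ → ZMod 2) where
  carrier := {a | a ∈ ST n ∧ rot n a = a}
  add_mem' := by
    rintro a b ⟨ha, ha'⟩ ⟨hb, hb'⟩
    exact ⟨add_mem ha hb, by rw [rot_add, ha', hb']⟩
  zero_mem' := ⟨zero_mem _, by funext i j; simp [rot]⟩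
  smul_mem' := by
    rintro c a ⟨ha, ha'⟩
    exact ⟨Submodule.smul_mem _ c ha, by rw [rot_smul, ha']⟩

/-- The subspace of horizontally symmetric Steinhaus triangles (fixed by `h`). -/
def HST (n : ℕ) : Submodule (ZMod 2) (ℕ → ℕ → ZMod 2) where
  carrier := {a | a ∈ ST n ∧ hrefl n a = a}
  add_mem' := by
    rintro a b ⟨ha, ha'⟩ ⟨hb, hb'⟩
    exact ⟨add_mem ha hb, by rw [hrefl_add, ha', hb']⟩
  zero_mem' := ⟨zero_mem _, by funext i j; simp [hrefl]⟩
  smul_mem' := by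
    rintro c a ⟨ha, ha'⟩
    exact ⟨Submodule.smul_mem _ c ha, by rw [hrefl_smul, ha']⟩

/-- The subspace of dihedrally symmetric Steinhaus triangles (fixed by `r` and `h`). -/
def DST (n : ℕ) : Submodule (ZMod 2) (ℕ → ℕ → ZMod 2) where
  carrier := {a | a ∈ ST n ∧ rot n a = a ∧ hrefl n a = a}
  add_mem' := by
    rintro a b ⟨ha, ha', ha''⟩ ⟨hb, hb', hb''⟩
    exact ⟨add_mem ha hb, by rw [rot_add, ha', hb'], by rw [hrefl_add, ha'', hb'']⟩
  zero_mem' := ⟨zero_mem _, by funext i j; simp [rot], by funext i j; simp [hrefl]⟩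
  smul_mem' := by
    rintro c a ⟨ha, ha', ha''⟩
    exact ⟨Submodule.smul_mem _ c ha, by rw [rot_smul, ha'],
      by rw [hrefl_smul, ha'']⟩

/-- `σ₂`: the sum of the first `n` terms of a sequence over `ZMod 2`. -/
def seqSum (n : ℕ) (S : ℕ → ZMod 2) : ZMod 2 := ∑ j ∈ Finset.Icc 1 n, S j

/-- The subspace `DST₀(n)` of dihedrally symmetric Steinhaus triangles whose
first row has zero sum. -/
def DST0 (n : ℕ) : Submodule (ZMod 2) (ℕ → ℕ → ZMod 2) where
  carrier := {a | a ∈ DST n ∧ seqSum n (a 1) = 0}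
  add_mem' := by
    rintro a b ⟨ha, ha'⟩ ⟨hb, hb'⟩
    refine ⟨add_mem ha hb, ?_⟩
    have h : seqSum n ((a + b) 1) = seqSum n (a 1) + seqSum n (b 1) := by
      simp [seqSum, Finset.sum_add_distrib]
    rw [h, ha', hb', add_zero]
  zero_mem' := ⟨zero_mem _, by simp [seqSum]⟩
  smul_mem' := by
    rintro c a ⟨ha, ha'⟩
    refine ⟨Submodule.smul_mem _ c ha, ?_⟩
    have h : seqSum n ((c • a) 1) = c • seqSum n (a 1) := by
      simp [seqSum, smul_eq_mul, Finset.mul_sum]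
    rw [h, ha', smul_zero]

/-- The derived sequence `∂S`. -/
def der (S : ℕ → ZMod 2) : ℕ → ZMod 2 := fun j => S j + S (j + 1)

/-- The antiderived sequence `∫_{i,x} S`, whose `j`-th term is
`x + Σ_{k=1}^{i-1} S k + Σ_{k=1}^{j-1} S k`. -/
def antider (i : ℕ) (x : ZMod 2) (S : ℕ → ZMod 2) : ℕ → ZMod 2 :=
  fun j => x + (∑ k ∈ Finset.Ico 1 i, S k) + (∑ k ∈ Finset.Ico 1 j, S k)

/-- A sequence of length `n` is symmetric. -/
def SymmSeq (n : ℕ) (S : ℕ → ZMod 2) : Prop :=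
  ∀ j, 1 ≤ j → j ≤ n → S (n - j + 1) = S j

/-- The binomial sequence `bs(k,l)` whose `j`-th term is `C(l+j-1, k) mod 2`. -/
def bseq (k l : ℤ) : ℕ → ZMod 2 := fun j => ((ibinom (l + (j : ℤ) - 1) k : ℤ) : ZMod 2)

/-- The map `H : ST(n) → ST(n-3)` removing the first row and the two sides. -/
def Hmap (n : ℕ) (a : ℕ → ℕ → ZMod 2) : ℕ → ℕ → ZMod 2 :=
  fun i j => if InTri (n - 3) i j then a (1 + i) (2 + j) else 0

/-- The projection `π_G` of a subspace `V` of triangles onto coordinates in `G`. -/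
def proj (V : Submodule (ZMod 2) (ℕ → ℕ → ZMod 2)) (G : Set (ℕ × ℕ)) :
    V →ₗ[ZMod 2] (G → ZMod 2) where
  toFun a := fun p => (a : ℕ → ℕ → ZMod 2) p.1.1 p.1.2
  map_add' := fun _ _ => rfl
  map_smul' := fun _ _ => rfl

/-- `G` is a generating index set of the subspace `V` of `ST(n)`:
`G` consists of triangle indices and `π_G : V → (ZMod 2)^G` is an isomorphism. -/
def IsGenIndexSet (n : ℕ) (V : Submodule (ZMod 2) (ℕ → ℕ → ZMod 2))
    (G : Set (ℕ × ℕ)) : Prop :=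
  (∀ p ∈ G, InTri n p.1 p.2) ∧ Function.Bijective (proj V G)

end Steinhaus

/-!
Let `H : DST(n) → DST(n-3)` delete the first row and the two sides of a triangle. The explicit
entries of `∇_k` show `H(∇_{k+1}) = ∇_k`, and `H(U_n) = 0`. Conversely, if `H a = 0` then the second
row of `a` vanishes away from its ends, so the first row is constant on `2, …, n-1`; rotation and
reflection then force its two end entries to vanish, i.e. `a` is a multiple of `U_n`. Hence a basis
of `DST(n-3)` lifts along `H` and, together with `U_n`, gives a basis of `DST(n)`. For odd `n`, `H`
is onto. For even `n`, the image of `H` lies in the hyperplane of triangles whose first row sums to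
zero; as the first row of `U_{n-3}` has odd sum, this hyperplane is spanned by the remaining basis
vectors of `DST(n-3)`, and the added vector `U_n` is `∇_0`. Induct on `n` in steps of `3`.
-/

theorem exists_basis_finCons_of_ker_eq_span_singleton {K V W : Type*} [Field K]
    [AddCommGroup V] [Module K V] [AddCommGroup W] [Module K W] (f : V →ₗ[K] W) {M : ℕ}
    {x : V} {v : Fin M → V} (hx : x ≠ 0) (hker : LinearMap.ker f = K ∙ x)
    (hli : LinearIndependent K (f ∘ v))
    (hrange : LinearMap.range f ≤ Submodule.span K (Set.range (f ∘ v))) :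
    ∃ b : Module.Basis (Fin (M + 1)) K V, ⇑b = Fin.cons x v := by
  have hx_notMem : x ∉ Submodule.span K (Set.range v) := fun hmem => hx <| by
    obtain ⟨c, rfl⟩ := (Submodule.mem_span_range_iff_exists_fun K).1 hmem
    have hfx : ∑ i, c i • f (v i) = 0 := by
      rw [← LinearMap.mem_ker.1 (hker ▸ Submodule.mem_span_singleton_self _), map_sum]
      simp only [map_smul]
    simp [Fintype.linearIndependent_iff.1 hli c hfx]
  have hli' : LinearIndependent K (Fin.cons x v : Fin (M + 1) → V) :=
    linearIndependent_finCons.2 ⟨hli.of_comp, hx_notMem⟩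
  have hspan : ⊤ ≤ Submodule.span K (Set.range (Fin.cons x v : Fin (M + 1) → V)) := by
    rw [Fin.range_cons, Submodule.span_insert, ← hker, sup_comm, ← Submodule.comap_map_eq,
      Submodule.map_span, ← Set.range_comp]
    exact fun a _ => hrange (LinearMap.mem_range_self f a)
  exact ⟨Module.Basis.mk hli' hspan, Module.Basis.coe_mk _ _⟩

theorem Module.Basis.mem_span_range_succ_of_eq_zero {R W : Type*} [CommSemiring R]
    [AddCommMonoid W] [Module R W] {M : ℕ} (b : Module.Basis (Fin (M + 1)) R W)
    (φ : W →ₗ[R] R) (h0 : φ (b 0) = 1) (hsucc : ∀ j : Fin M, φ (b j.succ) = 0) {y : W}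
    (hy : φ y = 0) : y ∈ Submodule.span R (Set.range (b ∘ Fin.succ)) := by
  have hφ : φ y = b.repr y 0 := by
    conv_lhs => rw [← b.sum_repr y, map_sum, Fin.sum_univ_succ]
    simp only [map_smul, h0, hsucc, smul_eq_mul, mul_one, mul_zero, Finset.sum_const_zero,
      add_zero]
  rw [← b.sum_repr y, Fin.sum_univ_succ, ← hφ, hy, zero_smul, zero_add]
  exact Submodule.sum_mem _ fun j _ => Submodule.smul_mem _ _ (Submodule.subset_span ⟨j, rfl⟩)

namespace Steinhaus

theorem ibinom_eq_choose (a : ℤ) {b : ℤ} (hb : 0 ≤ b) :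
    ibinom a b = Ring.choose a b.toNat := by
  rw [ibinom, if_neg (not_lt.2 hb)]
  split_ifs with ha
  · lift a to ℕ using ha
    simp [Ring.choose_natCast]
  · rw [← neg_neg a, Ring.choose_neg]
    have : -a + (b.toNat : ℤ) - 1 = ((b - a - 1).toNat : ℕ) := by omega
    rw [this, Ring.choose_natCast, Units.smul_def, Int.coe_negOnePow_natCast, smul_eq_mul, neg_neg]

theorem ibinom_of_neg (a : ℤ) {b : ℤ} (hb : b < 0) : ibinom a b = 0 := if_pos hb

@[simp]
theorem ibinom_zero_right (a : ℤ) : ibinom a 0 = 1 := by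
  rw [ibinom_eq_choose a le_rfl, Int.toNat_zero, Ring.choose_zero_right]

theorem ibinom_pascal (a b : ℤ) : ibinom a b = ibinom (a - 1) (b - 1) + ibinom (a - 1) b := by
  rcases lt_trichotomy b 0 with hb | rfl | hb
  · rw [ibinom_of_neg _ hb, ibinom_of_neg _ (by omega), ibinom_of_neg _ hb, add_zero]
  · rw [ibinom_zero_right, ibinom_zero_right, ibinom_of_neg _ (by omega), zero_add]
  · obtain ⟨k, rfl⟩ : ∃ k : ℕ, b = k + 1 := ⟨(b - 1).toNat, by omega⟩
    rw [ibinom_eq_choose _ (by omega), ibinom_eq_choose _ (by omega),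
      ibinom_eq_choose _ (by omega), add_sub_cancel_right, Int.toNat_natCast]
    conv_lhs => rw [← sub_add_cancel a 1]
    exact Ring.choose_succ_succ (a - 1) k

theorem ibinom_eq_neg_one_pow_mul (a : ℤ) {k : ℤ} (hk : 0 ≤ k) :
    ibinom a k = (-1) ^ k.toNat * ibinom (k - 1 - a) k := by
  rw [ibinom_eq_choose _ hk, ibinom_eq_choose _ hk]
  conv_lhs => rw [← neg_neg a]
  rw [Ring.choose_neg, Units.smul_def, Int.coe_negOnePow_natCast, smul_eq_mul,
    show -a + (k.toNat : ℤ) - 1 = k - 1 - a by omega]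

theorem intCast_ibinom_reflect (a : ℤ) {k : ℤ} (hk : 0 ≤ k) :
    ((ibinom a k : ℤ) : ZMod 2) = ((ibinom (k - 1 - a) k : ℤ) : ZMod 2) := by
  rw [ibinom_eq_neg_one_pow_mul a hk]
  push_cast
  rw [CharTwo.neg_eq, one_pow, one_mul]

theorem ibinom_of_nonpos (a : ℤ) {b : ℤ} (hb : b ≤ 0) :
    ibinom a b = if b = 0 then 1 else 0 := by
  split_ifs with h
  · rw [h, ibinom_zero_right]
  · exact ibinom_of_neg a (lt_of_le_of_ne hb h)

theorem der_bseq (k l : ℤ) : der (bseq k l) = bseq (k - 1) l := by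
  funext j
  simp only [der, bseq]
  rw [show l + ((j + 1 : ℕ) : ℤ) - 1 = l + j by push_cast; ring, ibinom_pascal (l + j) k]
  push_cast
  linear_combination CharTwo.add_self_eq_zero ((ibinom (l + j - 1) k : ℤ) : ZMod 2)

theorem iterate_der_bseq (k l : ℤ) (t : ℕ) : der^[t] (bseq k l) = bseq (k - t) l := by
  induction t with
  | zero => simp
  | succ t ih =>
    rw [Function.iterate_succ_apply', ih, der_bseq]
    congr 1
    push_cast
    ring

theorem bseq_zero (l : ℤ) : bseq 0 l = fun _ => 1 := by
  funext j
  simp [bseq]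

theorem symmSeq_bseq {n k : ℕ} (hpar : k % 2 = n % 2) :
    SymmSeq n (bseq k (((k : ℤ) - n) / 2)) := by
  intro j hj hjn
  have hidx : (k : ℤ) - 1 - (((k : ℤ) - n) / 2 + ((n - j + 1 : ℕ) : ℤ) - 1) =
      ((k : ℤ) - n) / 2 + j - 1 := by
    push_cast [Nat.cast_sub hjn]
    omega
  simp only [bseq]
  rw [intCast_ibinom_reflect _ (Int.natCast_nonneg k), hidx]

/-- The Steinhaus triangle `∇S` of size `n` with first row `S`. -/
def nabla (n : ℕ) (S : ℕ → ZMod 2) : ℕ → ℕ → ZMod 2 :=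
  fun i j => if InTri n i j then der^[i - 1] S (j - i + 1) else 0

theorem nabla_mem_ST (n : ℕ) (S : ℕ → ZMod 2) : nabla n S ∈ ST n := by
  refine ⟨fun i j h => if_neg h, fun i j hi hij hjn => ?_⟩
  obtain ⟨t, rfl⟩ : ∃ t, i = t + 2 := ⟨i - 2, by omega⟩
  have h : InTri n (t + 2) j := ⟨by omega, hij, hjn⟩
  have h₁ : InTri n (t + 2 - 1) (j - 1) := ⟨by omega, by omega, by omega⟩
  have h₂ : InTri n (t + 2 - 1) j := ⟨by omega, by omega, hjn⟩
  rw [nabla, nabla, nabla, if_pos h, if_pos h₁, if_pos h₂, show t + 2 - 1 = t + 1 by omega,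
    Function.iterate_succ_apply', show t + 1 - 1 = t by omega,
    show j - 1 - (t + 1) + 1 = j - (t + 2) + 1 by omega,
    show j - (t + 1) + 1 = j - (t + 2) + 1 + 1 by omega]
  rfl

theorem firstRow_nabla (n : ℕ) (S : ℕ → ZMod 2) : FirstRow n (nabla n S) S := by
  intro j hj hjn
  have h : InTri n 1 j := ⟨le_rfl, hj, hjn⟩
  rw [nabla, if_pos h, Nat.sub_self,
    Function.iterate_zero_apply, Nat.sub_add_cancel hj]

theorem eq_of_firstRow {n : ℕ} {a b : ℕ → ℕ → ZMod 2} (ha : a ∈ ST n) (hb : b ∈ ST n)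
    (h : ∀ j, 1 ≤ j → j ≤ n → a 1 j = b 1 j) : a = b := by
  funext i
  induction i with
  | zero => funext j; rw [ha.1 0 j (by simp [InTri]), hb.1 0 j (by simp [InTri])]
  | succ i ih =>
    funext j
    by_cases hij : InTri n (i + 1) j
    · rcases Nat.eq_zero_or_pos i with rfl | hi
      · exact h j hij.2.1 hij.2.2
      · rw [ha.2 (i + 1) j (by omega) hij.2.1 hij.2.2, hb.2 (i + 1) j (by omega) hij.2.1 hij.2.2,
          Nat.add_sub_cancel, ih]
    · rw [ha.1 _ _ hij, hb.1 _ _ hij]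

theorem eq_nabla_of_firstRow {n : ℕ} {a : ℕ → ℕ → ZMod 2} {S : ℕ → ZMod 2}
    (ha : a ∈ ST n) (hrow : FirstRow n a S) : a = nabla n S :=
  eq_of_firstRow ha (nabla_mem_ST n S) fun j hj hjn => by
    rw [hrow j hj hjn, firstRow_nabla n S j hj hjn]

theorem nabla_bseq_apply {n i j : ℕ} (k l : ℤ) (h : InTri n i j) :
    nabla n (bseq k l) i j = ((ibinom (l + j - i) (k + 1 - i) : ℤ) : ZMod 2) := by
  rw [nabla, if_pos h, iterate_der_bseq, bseq]
  congr 2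
  · push_cast [Nat.cast_sub h.2.1]
    ring
  · push_cast [Nat.cast_sub h.1]
    ring

section Symmetries

variable {n : ℕ}

theorem rot_apply {i j : ℕ} (a : ℕ → ℕ → ZMod 2) (h : InTri n i j) :
    rot n a i j = a (j - i + 1) (n - i + 1) := if_pos h

theorem hrefl_apply {i j : ℕ} (a : ℕ → ℕ → ZMod 2) (h : InTri n i j) :
    hrefl n a i j = a i (n - j + i) := if_pos h

theorem eq_of_inTri {a b : ℕ → ℕ → ZMod 2} (ha : ∀ i j, ¬InTri n i j → a i j = 0)
    (hb : ∀ i j, ¬InTri n i j → b i j = 0)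
    (h : ∀ i j, 1 ≤ i → i ≤ j → j ≤ n → a i j = b i j) : a = b := by
  funext i j
  by_cases hij : InTri n i j
  · exact h i j hij.1 hij.2.1 hij.2.2
  · rw [ha i j hij, hb i j hij]

theorem rot_mem_ST {a : ℕ → ℕ → ZMod 2} (ha : a ∈ ST n) : rot n a ∈ ST n := by
  refine ⟨fun i j h => if_neg h, fun i j hi hij hjn => ?_⟩
  have h : InTri n i j := ⟨by omega, hij, hjn⟩
  have h₁ : InTri n (i - 1) (j - 1) := ⟨by omega, by omega, by omega⟩
  have h₂ : InTri n (i - 1) j := ⟨by omega, by omega, hjn⟩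
  rw [rot_apply a h, rot_apply a h₁, rot_apply a h₂,
    show j - 1 - (i - 1) + 1 = j - i + 1 by omega, show j - (i - 1) + 1 = j - i + 1 + 1 by omega,
    show n - (i - 1) + 1 = n - i + 1 + 1 by omega,
    ha.2 (j - i + 1 + 1) (n - i + 1 + 1) (by omega) (by omega) (by omega),
    Nat.add_sub_cancel, Nat.add_sub_cancel]
  linear_combination -CharTwo.add_self_eq_zero (a (j - i + 1) (n - i + 1 + 1))

theorem hrefl_mem_ST {a : ℕ → ℕ → ZMod 2} (ha : a ∈ ST n) : hrefl n a ∈ ST n := by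
  refine ⟨fun i j h => if_neg h, fun i j hi hij hjn => ?_⟩
  have h : InTri n i j := ⟨by omega, hij, hjn⟩
  have h₁ : InTri n (i - 1) (j - 1) := ⟨by omega, by omega, by omega⟩
  have h₂ : InTri n (i - 1) j := ⟨by omega, by omega, hjn⟩
  rw [hrefl_apply a h, hrefl_apply a h₁, hrefl_apply a h₂,
    ha.2 i (n - j + i) hi (by omega) (by omega),
    show n - (j - 1) + (i - 1) = n - j + i by omega,
    show n - j + (i - 1) = n - j + i - 1 by omega, add_comm]

theorem rot_rot_rot {a : ℕ → ℕ → ZMod 2} (ha : a ∈ ST n) : rot n (rot n (rot n a)) = a :=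
  eq_of_inTri (fun _ _ h => if_neg h) ha.1 fun i j hi hij hjn => by
    have h : InTri n i j := ⟨hi, hij, hjn⟩
    have h₁ : InTri n (j - i + 1) (n - i + 1) := ⟨by omega, by omega, by omega⟩
    have h₂ : InTri n (n - j + 1) (n - j + i) := ⟨by omega, by omega, by omega⟩
    rw [rot_apply _ h, rot_apply _ h₁, show n - i + 1 - (j - i + 1) + 1 = n - j + 1 by omega,
      show n - (j - i + 1) + 1 = n - j + i by omega, rot_apply _ h₂,
      show n - j + i - (n - j + 1) + 1 = i by omega, show n - (n - j + 1) + 1 = j by omega]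

theorem hrefl_rot (a : ℕ → ℕ → ZMod 2) :
    hrefl n (rot n a) = rot n (rot n (hrefl n a)) :=
  eq_of_inTri (fun _ _ h => if_neg h) (fun _ _ h => if_neg h) fun i j hi hij hjn => by
    have h : InTri n i j := ⟨hi, hij, hjn⟩
    have h₁ : InTri n i (n - j + i) := ⟨hi, by omega, by omega⟩
    have h₂ : InTri n (j - i + 1) (n - i + 1) := ⟨by omega, by omega, by omega⟩
    have h₃ : InTri n (n - j + 1) (n - j + i) := ⟨by omega, by omega, by omega⟩
    rw [hrefl_apply _ h, rot_apply _ h₁, rot_apply _ h, rot_apply _ h₂,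
      show n - j + i - i + 1 = n - j + 1 by omega,
      show n - i + 1 - (j - i + 1) + 1 = n - j + 1 by omega,
      show n - (j - i + 1) + 1 = n - j + i by omega, hrefl_apply _ h₃,
      show n - (n - j + i) + (n - j + 1) = n - i + 1 by omega]

theorem rot_rho {a : ℕ → ℕ → ZMod 2} (ha : a ∈ ST n) : rot n (rho n a) = rho n a := by
  rw [rho, rot_add, rot_add, rot_rot_rot ha]
  abel

theorem hrefl_rho {a : ℕ → ℕ → ZMod 2} (ha : a ∈ ST n) (hs : hrefl n a = a) :
    hrefl n (rho n a) = rho n a := by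
  rw [rho, hrefl_add, hrefl_add, hrefl_rot, hrefl_rot, hs,
    rot_rot_rot (rot_mem_ST ha)]
  abel

theorem rho_mem_DST {a : ℕ → ℕ → ZMod 2} (ha : a ∈ ST n) (hs : hrefl n a = a) :
    rho n a ∈ DST n :=
  ⟨add_mem (add_mem (rot_mem_ST (rot_mem_ST ha)) (rot_mem_ST ha)) ha, rot_rho ha,
    hrefl_rho ha hs⟩

theorem hrefl_nabla {S : ℕ → ZMod 2} (hS : SymmSeq n S) : hrefl n (nabla n S) = nabla n S :=
  eq_of_firstRow (hrefl_mem_ST (nabla_mem_ST n S)) (nabla_mem_ST n S) fun j hj hjn => by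
    rw [hrefl_apply _ ⟨le_rfl, hj, hjn⟩, firstRow_nabla n S j hj hjn,
      firstRow_nabla n S (n - j + 1) (by omega) (by omega), hS j hj hjn]

end Symmetries

theorem rho_nabla_bseq_apply {n i j : ℕ} (k l : ℤ) (h : InTri n i j) :
    rho n (nabla n (bseq k l)) i j =
      ((ibinom (l + j - i) (k + 1 - i) + ibinom (l + n - j) (k + i - j) +
        ibinom (l + i - 1) (k + j - n) : ℤ) : ZMod 2) := by
  have ⟨hi, hij, hjn⟩ := h
  have h₁ : InTri n (j - i + 1) (n - i + 1) := ⟨by omega, by omega, by omega⟩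
  have h₂ : InTri n (n - j + 1) (n - j + i) := ⟨by omega, by omega, by omega⟩
  simp only [rho, Pi.add_apply]
  rw [rot_apply _ h, rot_apply _ h, rot_apply _ h₁,
    show n - i + 1 - (j - i + 1) + 1 = n - j + 1 by omega,
    show n - (j - i + 1) + 1 = n - j + i by omega,
    nabla_bseq_apply k l h, nabla_bseq_apply k l h₁, nabla_bseq_apply k l h₂,
    show l + ((n - j + i : ℕ) : ℤ) - ((n - j + 1 : ℕ) : ℤ) = l + i - 1 by omega,
    show k + 1 - ((n - j + 1 : ℕ) : ℤ) = k + j - n by omega,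
    show l + ((n - i + 1 : ℕ) : ℤ) - ((j - i + 1 : ℕ) : ℤ) = l + n - j by omega,
    show k + 1 - ((j - i + 1 : ℕ) : ℤ) = k + i - j by omega]
  push_cast
  ring

/-- The triangle `∇_k` of size `n`. -/
def nablaK (n k : ℕ) : ℕ → ℕ → ZMod 2 := rho n (nabla n (bseq k (((k : ℤ) - n) / 2)))

/-- The triangle `U_n`. -/
def Un (n : ℕ) : ℕ → ℕ → ZMod 2 := rho n (nabla n fun _ => 1)

theorem nablaK_zero (n : ℕ) : nablaK n 0 = Un n := by
  rw [nablaK, Nat.cast_zero, bseq_zero, Un]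

theorem nablaK_apply {n k i j : ℕ} (hpar : k % 2 = n % 2) (h : InTri n i j) :
    nablaK n k i j =
      ((ibinom (((k : ℤ) - n) / 2 + j - i) (k + 1 - i) +
        ibinom (((k : ℤ) + n) / 2 - j) (k + i - j) +
        ibinom (((k : ℤ) - n) / 2 + i - 1) (k + j - n) : ℤ) : ZMod 2) := by
  rw [nablaK, rho_nabla_bseq_apply _ _ h,
    show ((k : ℤ) - n) / 2 + n - j = ((k : ℤ) + n) / 2 - j by omega]

theorem Un_apply {n i j : ℕ} (h : InTri n i j) :
    Un n i j = (if i = 1 then 1 else 0) + (if i = j then 1 else 0) + (if j = n then 1 else 0) := by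
  have ⟨hi, hij, hjn⟩ := h
  rw [Un, ← bseq_zero 0, rho_nabla_bseq_apply 0 0 h, ibinom_of_nonpos _ (by omega),
    ibinom_of_nonpos _ (by omega), ibinom_of_nonpos _ (by omega)]
  simp only [show (0 : ℤ) + 1 - i = 0 ↔ i = 1 by omega,
    show (0 : ℤ) + i - j = 0 ↔ i = j by omega, show (0 : ℤ) + j - n = 0 ↔ j = n by omega,
    Int.cast_add, Int.cast_ite, Int.cast_one, Int.cast_zero]

theorem nablaK_mem_DST {n k : ℕ} (hpar : k % 2 = n % 2) : nablaK n k ∈ DST n :=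
  rho_mem_DST (nabla_mem_ST _ _) (hrefl_nabla (symmSeq_bseq hpar))

theorem Un_mem_DST (n : ℕ) : Un n ∈ DST n :=
  rho_mem_DST (nabla_mem_ST _ _) (hrefl_nabla fun _ _ _ => rfl)

theorem Un_ne_zero {n : ℕ} (hn : 3 ≤ n) : Un n ≠ 0 := fun h => by
  have h12 := congrFun₂ h 1 2
  simp [Un_apply (⟨le_rfl, by omega, by omega⟩ : InTri n 1 2), show 2 ≠ n by omega] at h12

section RemoveBorder

variable {n : ℕ}

theorem Hmap_apply {i j : ℕ} (a : ℕ → ℕ → ZMod 2) (h : InTri (n - 3) i j) :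
    Hmap n a i j = a (1 + i) (2 + j) := if_pos h

theorem apply_eq_of_rot_eq {a : ℕ → ℕ → ZMod 2} (hr : rot n a = a) {i j : ℕ}
    (h : InTri n i j) : a i j = a (j - i + 1) (n - i + 1) := by
  conv_lhs => rw [← hr]
  exact rot_apply a h

theorem apply_eq_of_hrefl_eq {a : ℕ → ℕ → ZMod 2} (hs : hrefl n a = a) {i j : ℕ}
    (h : InTri n i j) : a i j = a i (n - j + i) := by
  conv_lhs => rw [← hs]
  exact hrefl_apply a h

theorem Hmap_mem_DST {a : ℕ → ℕ → ZMod 2} (ha : a ∈ DST n) :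
    Hmap n a ∈ DST (n - 3) := by
  obtain ⟨hst, hrot, hsym⟩ := ha
  have hvanish : ∀ i j, ¬InTri (n - 3) i j → Hmap n a i j = 0 := fun _ _ h => if_neg h
  refine ⟨⟨hvanish, fun i j hi hij hjn => ?_⟩, ?_, ?_⟩
  · rw [Hmap_apply a ⟨by omega, hij, hjn⟩, Hmap_apply a ⟨by omega, by omega, by omega⟩,
      Hmap_apply a ⟨by omega, by omega, hjn⟩,
      hst.2 (1 + i) (2 + j) (by omega) (by omega) (by omega),
      show 1 + i - 1 = 1 + (i - 1) by omega, show 2 + j - 1 = 2 + (j - 1) by omega]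
  · refine eq_of_inTri (fun _ _ h => if_neg h) hvanish fun i j hi hij hjn => ?_
    have h : InTri (n - 3) i j := ⟨hi, hij, hjn⟩
    rw [rot_apply _ h, Hmap_apply a ⟨by omega, by omega, by omega⟩, Hmap_apply a h,
      apply_eq_of_rot_eq hrot (⟨by omega, by omega, by omega⟩ : InTri n (1 + i) (2 + j)),
      show 2 + j - (1 + i) + 1 = 1 + (j - i + 1) by omega,
      show n - (1 + i) + 1 = 2 + (n - 3 - i + 1) by omega]
  · refine eq_of_inTri (fun _ _ h => if_neg h) hvanish fun i j hi hij hjn => ?_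
    have h : InTri (n - 3) i j := ⟨hi, hij, hjn⟩
    rw [hrefl_apply _ h, Hmap_apply a ⟨hi, by omega, by omega⟩, Hmap_apply a h,
      apply_eq_of_hrefl_eq hsym (⟨by omega, by omega, by omega⟩ : InTri n (1 + i) (2 + j)),
      show n - (2 + j) + (1 + i) = 2 + (n - 3 - j + i) by omega]

theorem Hmap_nablaK (hn : 3 ≤ n) {k : ℕ} (hpar : (k + 1) % 2 = n % 2) :
    Hmap n (nablaK n (k + 1)) = nablaK (n - 3) k := by
  refine eq_of_inTri (fun _ _ h => if_neg h) (nablaK_mem_DST (by omega)).1.1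
    fun i j hi hij hjn => ?_
  have h : InTri (n - 3) i j := ⟨hi, hij, hjn⟩
  rw [Hmap_apply _ h, nablaK_apply hpar ⟨by omega, by omega, by omega⟩,
    nablaK_apply (by omega) h]
  have e₁ : ((k : ℤ) - (n - 3 : ℕ)) / 2 = ((k + 1 : ℕ) - (n : ℤ)) / 2 + 1 := by omega
  have e₂ : ((k : ℤ) + (n - 3 : ℕ)) / 2 = ((k + 1 : ℕ) + (n : ℤ)) / 2 - 2 := by omega
  rw [e₁, e₂]
  push_cast [Nat.cast_sub hn]
  ring_nf

theorem Hmap_Un : Hmap n (Un n) = 0 := by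
  funext i j
  by_cases h : InTri (n - 3) i j
  · have ⟨hi, hij, hjn⟩ := h
    rw [Hmap_apply _ h, Un_apply ⟨by omega, by omega, by omega⟩, if_neg (by omega),
      if_neg (by omega), if_neg (by omega)]
    simp
  · exact if_neg h

theorem eq_smul_Un_of_Hmap_eq_zero (hn : 3 ≤ n) {a : ℕ → ℕ → ZMod 2} (ha : a ∈ DST n)
    (h0 : Hmap n a = 0) : a = a 1 2 • Un n := by
  obtain ⟨hst, hrot, hsym⟩ := ha
  have hstep : ∀ j, 2 ≤ j → j ≤ n - 2 → a 1 (j + 1) = a 1 j := fun j hj hjn => by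
    have hzero := congrFun₂ h0 1 (j - 1)
    rw [Hmap_apply a ⟨le_rfl, by omega, by omega⟩,
      hst.2 (1 + 1) (2 + (j - 1)) le_rfl (by omega) (by omega),
      show 2 + (j - 1) - 1 = j by omega, show 2 + (j - 1) = j + 1 by omega] at hzero
    exact (CharTwo.add_eq_zero.1 hzero).symm
  have hmid : ∀ j, 2 ≤ j → j ≤ n - 1 → a 1 j = a 1 2 := by
    intro j hj
    induction j, hj using Nat.le_induction with
    | base => exact fun _ => rfl
    | succ j hj ih => exact fun hjn => (hstep j hj (by omega)).trans (ih (by omega))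
  have h11 : a 1 1 = 0 := by
    have hsum := hst.2 2 2 le_rfl le_rfl (by omega)
    rw [apply_eq_of_rot_eq hrot (⟨by omega, le_rfl, by omega⟩ : InTri n 2 2),
      show n - 2 + 1 = n - 1 by omega, hmid (n - 1) (by omega) le_rfl,
      show 2 - 1 = 1 from rfl] at hsum
    linear_combination -hsum
  have h1n : a 1 n = 0 := by
    rw [apply_eq_of_hrefl_eq hsym (⟨le_rfl, by omega, le_rfl⟩ : InTri n 1 n), Nat.sub_self,
      zero_add, h11]
  refine eq_of_firstRow hst (Submodule.smul_mem _ _ (Un_mem_DST n).1) fun j hj hjn => ?_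
  rw [Pi.smul_apply, Pi.smul_apply, Un_apply ⟨le_rfl, hj, hjn⟩, smul_eq_mul]
  rcases eq_or_ne j 1 with rfl | hj1
  · simp [h11, show 1 ≠ n by omega, CharTwo.add_self_eq_zero]
  rcases eq_or_ne j n with rfl | hjn'
  · simp [h1n, hj1.symm, CharTwo.add_self_eq_zero]
  · simp [hmid j (by omega) (by omega), hj1.symm, hjn']

theorem seqSum_Hmap (hn : 3 ≤ n) {a : ℕ → ℕ → ZMod 2} (ha : a ∈ DST n) :
    seqSum (n - 3) (Hmap n a 1) = 0 := by
  obtain ⟨hst, -, hsym⟩ := ha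
  have hterm : ∀ j ∈ Icc 1 (n - 3), Hmap n a 1 j = a 1 (j + 1 + 1) - a 1 (j + 1) := by
    intro j hj
    rw [mem_Icc] at hj
    rw [Hmap_apply a ⟨le_rfl, hj.1, hj.2⟩, hst.2 (1 + 1) (2 + j) le_rfl (by omega) (by omega),
      CharTwo.sub_eq_add, show 2 + j - 1 = j + 1 by omega, show 2 + j = j + 1 + 1 by omega]
    exact add_comm _ _
  rw [seqSum, sum_congr rfl hterm, ← Ico_add_one_right_eq_Icc,
    sum_Ico_sub (fun j => a 1 (j + 1)) (by omega), sub_eq_zero,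
    apply_eq_of_hrefl_eq hsym (⟨le_rfl, by omega, by omega⟩ : InTri n 1 2)]
  congr 1
  omega

theorem seqSum_Un (hodd : n % 2 = 1) : seqSum n (Un n 1) = 1 := by
  have hrow : ∀ j ∈ Icc 1 n,
      Un n 1 j = 1 + ((if 1 = j then 1 else 0) + if j = n then 1 else 0) := by
    intro j hj
    rw [mem_Icc] at hj
    rw [Un_apply ⟨le_rfl, hj.1, hj.2⟩, if_pos rfl, add_assoc]
  have hn : (n : ZMod 2) = 1 := by rw [CharTwo.natCast_eq_mod, hodd, Nat.cast_one]
  rw [seqSum, sum_congr rfl hrow]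
  simp [sum_add_distrib, sum_ite_eq, sum_ite_eq', show 1 ≤ n by omega, hn,
    CharTwo.add_self_eq_zero]

end RemoveBorder

def dimDST (n : ℕ) : ℕ := (n + 3) / 6 + if n % 6 = 1 then 1 else 0

theorem dimDST_of_odd {n : ℕ} (hodd : n % 2 = 1) :
    dimDST n = dimDST (n - 3) + 1 := by
  unfold dimDST
  split_ifs <;> omega

theorem dimDST_of_even {n : ℕ} (hev : n % 2 = 0) : dimDST n = dimDST (n - 3) := by
  unfold dimDST
  split_ifs <;> omega

/-- The proposed basis of `DST(n)`: `U_n`, followed by the `∇_k` with `0 < k ≡ n (mod 2)`. -/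
def basisTri (n i : ℕ) : ℕ → ℕ → ZMod 2 :=
  if i = 0 then Un n else nablaK n (2 * i - n % 2)

theorem basisTri_mem_DST (n i : ℕ) : basisTri n i ∈ DST n := by
  unfold basisTri
  split_ifs
  · exact Un_mem_DST n
  · exact nablaK_mem_DST (by omega)

def basisVec (n i : ℕ) : DST n := ⟨basisTri n i, basisTri_mem_DST n i⟩

def HmapDST (n : ℕ) : DST n →ₗ[ZMod 2] DST (n - 3) where
  toFun a := ⟨Hmap n a, Hmap_mem_DST a.2⟩
  map_add' a b := by
    ext i j
    simp only [Hmap, Submodule.coe_add, Pi.add_apply]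
    split_ifs <;> simp
  map_smul' c a := by
    ext i j
    simp only [Hmap, Submodule.coe_smul, Pi.smul_apply, RingHom.id_apply]
    split_ifs <;> simp

def firstRowSum (n : ℕ) : DST n →ₗ[ZMod 2] ZMod 2 where
  toFun a := seqSum n ((a : ℕ → ℕ → ZMod 2) 1)
  map_add' a b := by simp [seqSum, sum_add_distrib]
  map_smul' c a := by simp [seqSum, mul_sum]

section Step

variable {n : ℕ}

theorem ker_HmapDST (hn : 3 ≤ n) : LinearMap.ker (HmapDST n) = ZMod 2 ∙ basisVec n 0 := by
  ext a
  rw [LinearMap.mem_ker, Submodule.mem_span_singleton]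
  constructor
  · intro h0
    exact ⟨_, Subtype.ext (eq_smul_Un_of_Hmap_eq_zero hn a.2 (congrArg Subtype.val h0)).symm⟩
  · rintro ⟨c, rfl⟩
    rw [map_smul, show HmapDST n (basisVec n 0) = 0 from Subtype.ext Hmap_Un, smul_zero]

theorem HmapDST_basisVec_succ_of_odd (hn : 3 ≤ n) (hodd : n % 2 = 1) (j : ℕ) :
    HmapDST n (basisVec n (j + 1)) = basisVec (n - 3) j := by
  apply Subtype.ext
  change Hmap n (basisTri n (j + 1)) = basisTri (n - 3) j
  rw [basisTri, if_neg j.succ_ne_zero, show 2 * (j + 1) - n % 2 = 2 * j + 1 by omega,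
    Hmap_nablaK hn (by omega), basisTri]
  split_ifs with hj
  · rw [hj, nablaK_zero]
  · rw [show 2 * j - (n - 3) % 2 = 2 * j by omega]

theorem HmapDST_basisVec_succ_of_even (hn : 3 ≤ n) (hev : n % 2 = 0) (j : ℕ) :
    HmapDST n (basisVec n (j + 1)) = basisVec (n - 3) (j + 1) := by
  apply Subtype.ext
  change Hmap n (basisTri n (j + 1)) = basisTri (n - 3) (j + 1)
  rw [basisTri, basisTri, if_neg j.succ_ne_zero, if_neg j.succ_ne_zero,
    show 2 * (j + 1) - n % 2 = 2 * j + 1 + 1 by omega, Hmap_nablaK hn (by omega),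
    show 2 * (j + 1) - (n - 3) % 2 = 2 * j + 1 by omega]

theorem exists_basis_of_HmapDST (hn : 3 ≤ n) {M : ℕ} (hM : dimDST n = M + 1)
    (hli : LinearIndependent (ZMod 2) fun j : Fin M => HmapDST n (basisVec n (j + 1)))
    (hrange : LinearMap.range (HmapDST n) ≤
      Submodule.span (ZMod 2) (Set.range fun j : Fin M => HmapDST n (basisVec n (j + 1)))) :
    ∃ b : Module.Basis (Fin (dimDST n)) (ZMod 2) (DST n), ∀ i, b i = basisVec n i := by
  have hU : basisVec n 0 ≠ 0 := fun h => Un_ne_zero hn (congrArg Subtype.val h)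
  obtain ⟨b, hb⟩ := exists_basis_finCons_of_ker_eq_span_singleton (HmapDST n) hU
    (ker_HmapDST hn) hli hrange
  rw [hM]
  exact ⟨b, fun i => by rw [hb]; exact Fin.cases rfl (fun _ => rfl) i⟩

theorem exists_basis_of_odd (hn : 3 ≤ n) (hodd : n % 2 = 1)
    (b : Module.Basis (Fin (dimDST (n - 3))) (ZMod 2) (DST (n - 3)))
    (hb : ∀ i, b i = basisVec (n - 3) i) :
    ∃ b : Module.Basis (Fin (dimDST n)) (ZMod 2) (DST n), ∀ i, b i = basisVec n i := by
  have himage : (fun j : Fin (dimDST (n - 3)) => HmapDST n (basisVec n (j + 1))) = b :=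
    funext fun j => by rw [hb, HmapDST_basisVec_succ_of_odd hn hodd]
  refine exists_basis_of_HmapDST hn (dimDST_of_odd hodd) ?_ ?_ <;> rw [himage]
  · exact b.linearIndependent
  · rw [b.span_eq]
    exact le_top

theorem exists_basis_of_even (hn : 3 ≤ n) (hev : n % 2 = 0)
    (b : Module.Basis (Fin (dimDST (n - 3))) (ZMod 2) (DST (n - 3)))
    (hb : ∀ i, b i = basisVec (n - 3) i) :
    ∃ b : Module.Basis (Fin (dimDST n)) (ZMod 2) (DST n), ∀ i, b i = basisVec n i := by
  obtain ⟨M, hM⟩ : ∃ M, dimDST (n - 3) = M + 1 :=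
    ⟨dimDST (n - 3) - 1, by unfold dimDST; split_ifs <;> omega⟩
  revert b
  rw [hM]
  intro b hb
  have himage : (fun j : Fin M => HmapDST n (basisVec n (j + 1))) = b ∘ Fin.succ :=
    funext fun j => by rw [Function.comp_apply, hb, HmapDST_basisVec_succ_of_even hn hev]; rfl
  refine exists_basis_of_HmapDST hn (by rw [dimDST_of_even hev, hM]) ?_ ?_ <;> rw [himage]
  · exact b.linearIndependent.comp _ (Fin.succ_injective _)
  · rintro _ ⟨a, rfl⟩
    refine b.mem_span_range_succ_of_eq_zero (firstRowSum (n - 3)) ?_ (fun j => ?_)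
      (seqSum_Hmap hn a.2)
    · rw [hb]
      exact seqSum_Un (by omega)
    · rw [hb, Fin.val_succ, ← HmapDST_basisVec_succ_of_even hn hev]
      exact seqSum_Hmap hn (basisVec n _).2

end Step

theorem eq_zero_of_mem_DST_zero {a : ℕ → ℕ → ZMod 2} (ha : a ∈ DST 0) : a = 0 :=
  funext₂ fun i j => ha.1.1 i j fun ⟨_, _, _⟩ => by omega

theorem eq_zero_of_mem_DST_two {a : ℕ → ℕ → ZMod 2} (ha : a ∈ DST 2) : a = 0 := by
  obtain ⟨hst, hrot, hsym⟩ := ha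
  have e₁ : a 1 1 = a 1 2 := apply_eq_of_hrefl_eq hsym ⟨le_rfl, le_rfl, by omega⟩
  have e₂ : a 1 2 = a 2 2 := apply_eq_of_rot_eq hrot ⟨le_rfl, by omega, le_rfl⟩
  have e₃ : a 2 2 = a 1 1 + a 1 2 := hst.2 2 2 le_rfl le_rfl le_rfl
  have h₁₂ : a 1 2 = 0 := by linear_combination -(e₁ + e₂ + e₃)
  refine eq_of_firstRow hst (zero_mem _) fun j hj hj2 => ?_
  interval_cases j <;> simp [e₁, h₁₂]

theorem exists_basis_of_subsingleton {n : ℕ} (h0 : dimDST n = 0)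
    (htriv : ∀ {a}, a ∈ DST n → a = 0) :
    ∃ b : Module.Basis (Fin (dimDST n)) (ZMod 2) (DST n), ∀ i, b i = basisVec n i := by
  have : Subsingleton (DST n) :=
    ⟨fun x y => Subtype.ext ((htriv x.2).trans (htriv y.2).symm)⟩
  rw [h0]
  exact ⟨Module.Basis.empty _, fun i => i.elim0⟩

theorem exists_basis_one :
    ∃ b : Module.Basis (Fin (dimDST 1)) (ZMod 2) (DST 1), ∀ i, b i = basisVec 1 i := by
  have hU : Un 1 1 1 = 1 := by
    rw [Un_apply (⟨le_rfl, le_rfl, le_rfl⟩ : InTri 1 1 1)]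
    decide
  have hker : LinearMap.ker (0 : DST 1 →ₗ[ZMod 2] DST 1) = ZMod 2 ∙ basisVec 1 0 := by
    rw [LinearMap.ker_zero, eq_comm, eq_top_iff]
    rintro a -
    refine Submodule.mem_span_singleton.2 ⟨(a : ℕ → ℕ → ZMod 2) 1 1, Subtype.ext ?_⟩
    refine eq_of_firstRow (Submodule.smul_mem _ _ (Un_mem_DST 1).1) a.2.1 fun j hj hj1 => ?_
    obtain rfl : j = 1 := by omega
    simp [basisVec, basisTri, hU]
  have hne : basisVec 1 0 ≠ 0 := fun h => by
    simpa [basisVec, basisTri, hU] using congrFun₂ (congrArg Subtype.val h) 1 1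
  -- `DST 1` is the line spanned by `U_1`: the kernel of the zero map.
  obtain ⟨b, hb⟩ := exists_basis_finCons_of_ker_eq_span_singleton
    (0 : DST 1 →ₗ[ZMod 2] DST 1) (v := fun j : Fin 0 => basisVec 1 (j + 1)) hne hker
    linearIndependent_empty_type (by simp)
  rw [show dimDST 1 = 0 + 1 from rfl]
  exact ⟨b, fun i => by rw [hb]; exact Fin.cases rfl (fun j => j.elim0) i⟩

theorem exists_basis_DST (n : ℕ) :
    ∃ b : Module.Basis (Fin (dimDST n)) (ZMod 2) (DST n), ∀ i, b i = basisVec n i := by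
  induction n using Nat.strong_induction_on with
  | _ n ih =>
    rcases lt_or_ge n 3 with hn | hn
    · interval_cases n
      · exact exists_basis_of_subsingleton rfl eq_zero_of_mem_DST_zero
      · exact exists_basis_one
      · exact exists_basis_of_subsingleton rfl eq_zero_of_mem_DST_two
    obtain ⟨b, hb⟩ := ih (n - 3) (by omega)
    rcases Nat.mod_two_eq_zero_or_one n with hev | hodd
    · exact exists_basis_of_even hn hev b hb
    · exact exists_basis_of_odd hn hodd b hb

theorem basisTri_of_even {n : ℕ} (hev : n % 2 = 0) (i : ℕ) :
    basisTri n i = nablaK n (2 * i) := by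
  unfold basisTri
  split_ifs with hi
  · rw [hi, nablaK_zero]
  · rw [hev, Nat.sub_zero]

theorem basisTri_of_odd {n i : ℕ} (hodd : n % 2 = 1) (hi : i ≠ 0) :
    basisTri n i = nablaK n (2 * (i - 1) + 1) := by
  rw [basisTri, if_neg hi, hodd, show 2 * i - 1 = 2 * (i - 1) + 1 by omega]

theorem rho_eq_nablaK {n k : ℕ} {a : ℕ → ℕ → ZMod 2} (ha : a ∈ ST n)
    (hrow : FirstRow n a (bseq k (((k : ℤ) - n) / 2))) : rho n a = nablaK n k := by
  rw [eq_nabla_of_firstRow ha hrow, nablaK]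

theorem rho_eq_Un {n : ℕ} {a : ℕ → ℕ → ZMod 2} (ha : a ∈ ST n) (hrow : FirstRow n a fun _ => 1) :
    rho n a = Un n := by
  rw [eq_nabla_of_firstRow ha hrow, Un]

/-- Here `T k` stands for `∇(bs_n(k, (k-n)/2))` and `u` for `∇((1)_n)`, so that `∇_k = ρ(T k)` and
`U_n = ρ(u)`. -/
theorem statement16 (n m : ℕ) (hm : m = (n + 3) / 6 + if n % 6 = 1 then 1 else 0)
    (T : ℕ → ℕ → ℕ → ZMod 2)
    (hT : ∀ k, k < n / 3 → k % 2 = n % 2 →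
      T k ∈ ST n ∧ FirstRow n (T k) (bseq (k : ℤ) (((k : ℤ) - (n : ℤ)) / 2)))
    (u : ℕ → ℕ → ZMod 2) (hu : u ∈ ST n) (hurow : FirstRow n u (fun _ => 1)) :
    (∀ k, k < n / 3 → k % 2 = n % 2 → ∀ i j, 1 ≤ i → i ≤ j → j ≤ n →
      rho n (T k) i j =
        ((ibinom (((k : ℤ) - (n : ℤ)) / 2 + (j : ℤ) - (i : ℤ)) ((k : ℤ) + 1 - (i : ℤ)) +
          ibinom (((k : ℤ) + (n : ℤ)) / 2 - (j : ℤ)) ((k : ℤ) + (i : ℤ) - (j : ℤ)) +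
          ibinom (((k : ℤ) - (n : ℤ)) / 2 + (i : ℤ) - 1) ((k : ℤ) + (j : ℤ) - (n : ℤ)) : ℤ) : ZMod 2)) ∧
    (n % 2 = 0 →
      ∃ b : Module.Basis (Fin m) (ZMod 2) (DST n),
        ∀ k : Fin m, (b k : ℕ → ℕ → ZMod 2) = rho n (T (2 * (k : ℕ)))) ∧
    (n % 2 = 1 →
      ∃ b : Module.Basis (Fin m) (ZMod 2) (DST n),
        ∀ k : Fin m, (b k : ℕ → ℕ → ZMod 2) =
          if (k : ℕ) = 0 then rho n u else rho n (T (2 * ((k : ℕ) - 1) + 1))) := by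
  obtain ⟨b, hb⟩ := exists_basis_DST n
  let b' := b.reindex (finCongr (hm : m = dimDST n).symm)
  have hb' (k : Fin m) : (b' k : ℕ → ℕ → ZMod 2) = basisTri n k := by
    simp only [b', Module.Basis.reindex_apply, hb]
    rfl
  have hkm (k : Fin m) : k < (n + 3) / 6 + if n % 6 = 1 then 1 else 0 := hm ▸ k.isLt
  refine ⟨fun k hk hkp i j hi hij hjn => ?_, fun hev => ⟨b', fun k => ?_⟩,
    fun hodd => ⟨b', fun k => ?_⟩⟩
  · rw [rho_eq_nablaK (hT k hk hkp).1 (hT k hk hkp).2, nablaK_apply hkp ⟨hi, hij, hjn⟩]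
  · have hk : 2 * (k : ℕ) < n / 3 := by have := hkm k; split_ifs at this <;> omega
    rw [hb', basisTri_of_even hev, rho_eq_nablaK (hT _ hk (by omega)).1 (hT _ hk (by omega)).2]
  · split_ifs with hk0
    · rw [hb', hk0, rho_eq_Un hu hurow]
      rfl
    · have hk : 2 * ((k : ℕ) - 1) + 1 < n / 3 := by have := hkm k; split_ifs at this <;> omega
      rw [hb', basisTri_of_odd hodd hk0,
        rho_eq_nablaK (hT _ hk (by omega)).1 (hT _ hk (by omega)).2]

end Steinhaus
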